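/- For a tree T on n vertices with signed incidence matrix B ∈ ℝ^{(n-1) × n} and any assignment θ_l ∈ ℝ^{n-1}, and for any voltage magnitudes v : V → (0, ∞), if |θ_l(e)| < v(s_e) v(r_e) for every edge e, then there exist nodal angles φ : V → ℝ such that v(s_e) v(r_e) sin(φ(s_e) - φ(r_e)) = θ_l(e) for all edges e. -/

import Mathlib

def GraphConnected {E V : Type*} (tail head : E → V) : Prop :=
  ∀ v w : V, Relation.ReflTransGen
    (fun a b => ∃ e : E, (tail e = a ∧ head e = b) ∨ (tail e = b ∧ head e = a)) v w

/-! On a connected graph the only potentials with zero differences along every edge are the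
constants, so by rank–nullity the edge-difference map `φ ↦ (φ (tail e) - φ (head e))ₑ` has rank
`|V| - 1`; for a tree this is `|E|`, so every vector of branch angle differences is realised,
in particular `e ↦ arcsin (θl e / (v (tail e) * v (head e)))`. -/

open Module

section IncidenceMap

variable {E V : Type*} (K : Type*) [Field K] (tail head : E → V)

def incidenceMap : (V → K) →ₗ[K] (E → K) where
  toFun φ e := φ (tail e) - φ (head e)
  map_add' φ ψ := by ext e; simp only [Pi.add_apply]; ring
  map_smul' c φ := by ext e; simp only [Pi.smul_apply, smul_eq_mul, RingHom.id_apply]; ring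

variable {K tail head}

@[simp]
theorem incidenceMap_apply (φ : V → K) (e : E) :
    incidenceMap K tail head φ e = φ (tail e) - φ (head e) := rfl

theorem GraphConnected.ker_incidenceMap_le_span_one (hconn : GraphConnected tail head) :
    LinearMap.ker (incidenceMap K tail head) ≤ Submodule.span K {1} := by
  intro φ hφ
  have hedge : ∀ e, φ (tail e) = φ (head e) := fun e =>
    sub_eq_zero.mp (congrFun (LinearMap.mem_ker.mp hφ) e)
  have hconst : ∀ a b, φ a = φ b := by
    intro a b
    induction hconn a b with
    | refl => rfl
    | tail _ hstep ih =>
      obtain ⟨e, ⟨rfl, rfl⟩ | ⟨rfl, rfl⟩⟩ := hstep <;> rw [ih, hedge]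
  rcases isEmpty_or_nonempty V with _ | ⟨⟨a⟩⟩
  · simp [Subsingleton.elim φ 0]
  · exact Submodule.mem_span_singleton.mpr ⟨φ a, funext fun b => by simp [hconst b a]⟩

theorem GraphConnected.incidenceMap_surjective [Fintype E] [Fintype V]
    (hconn : GraphConnected tail head) (hcard : Fintype.card E ≤ Fintype.card V - 1) :
    Function.Surjective (incidenceMap K tail head) := by
  have hker : finrank K (LinearMap.ker (incidenceMap K tail head)) ≤ 1 :=
    (Submodule.finrank_mono hconn.ker_incidenceMap_le_span_one).trans
      ((finrank_span_le_card ({1} : Set (V → K))).trans_eq (by simp))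
  have hrank := LinearMap.finrank_range_add_finrank_ker (incidenceMap K tail head)
  rw [finrank_fintype_fun_eq_card] at hrank
  rw [← LinearMap.range_eq_top]
  apply Submodule.eq_top_of_finrank_eq
  apply le_antisymm (Submodule.finrank_le _)
  rw [finrank_fintype_fun_eq_card]
  omega

end IncidenceMap

theorem Real.mul_sin_arcsin_div {x c : ℝ} (h : |x| ≤ c) : c * sin (arcsin (x / c)) = x := by
  rcases (abs_nonneg x).trans h |>.eq_or_lt with hc | hc
  · subst hc
    simpa using (abs_nonpos_iff.mp h).symm
  · have hxc : |x / c| ≤ 1 := by rwa [abs_div, abs_of_pos hc, div_le_one hc]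
    rw [sin_arcsin (abs_le.mp hxc).1 (abs_le.mp hxc).2, mul_div_cancel₀ x hc.ne']

theorem tree_angle_recovery_general {E V : Type*} [Fintype E] [Fintype V]
    (tail head : E → V)
    (hconn : GraphConnected tail head)
    (hcard : Fintype.card E = Fintype.card V - 1)
    (v : V → ℝ)
    (θl : E → ℝ) (hθl : ∀ e, |θl e| < v (tail e) * v (head e)) :
    ∃ φ : V → ℝ, ∀ e : E,
      v (tail e) * v (head e) * Real.sin (φ (tail e) - φ (head e)) = θl e := by
  obtain ⟨φ, hφ⟩ := hconn.incidenceMap_surjective (K := ℝ) hcard.le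
    fun e => Real.arcsin (θl e / (v (tail e) * v (head e)))
  refine ⟨φ, fun e => ?_⟩
  rw [← incidenceMap_apply, hφ]
  exact Real.mul_sin_arcsin_div (hθl e).le

/-- Angle recovery always succeeds in radial networks: for a tree (connected graph with
`n - 1` edges), branch targets `θl` with `|θl e| < v(tail e)·v(head e)`, and positive voltage
magnitudes `v`, there exist nodal angles `φ` with
`v(tail e)·v(head e)·sin(φ(tail e) - φ(head e)) = θl e` on every edge. -/
theorem tree_angle_recovery {E V : Type*} [Fintype E] [Fintype V] [Nonempty V]
    (tail head : E → V)
    (hsimple : ∀ e : E, tail e ≠ head e)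
    (hconn : GraphConnected tail head)
    (hcard : Fintype.card E = Fintype.card V - 1)
    (v : V → ℝ) (hv : ∀ n, 0 < v n)
    (θl : E → ℝ) (hθl : ∀ e, |θl e| < v (tail e) * v (head e)) :
    ∃ φ : V → ℝ, ∀ e : E,
      v (tail e) * v (head e) * Real.sin (φ (tail e) - φ (head e)) = θl e :=
  tree_angle_recovery_general tail head hconn hcard v θl hθl
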